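/- arXiv:2106.06251 — 8 statements merged into one kernel-verified Lean document; each statement's English description precedes it below -/
import Mathlib

section
/- For any real number k in [-1,1], ((π - arccos(k))/π)·k + √(1-k²)/π ≤ 1/π + k/2 + (1/2 - 1/π)·k². -/
open Real Set

noncomputable def hfun (x : ℝ) : ℝ :=
  1 - π * x / 2 + (π / 2 - 1) * x ^ 2 + x * Real.arccos x - Real.sqrt (1 - x ^ 2)

lemma hfun_deriv {x : ℝ} (h1 : -1 < x) (h2 : x < 1) :
    HasDerivAt hfun ((π - 2) * x - Real.arcsin x) x := by
  have hs : (0:ℝ) < 1 - x ^ 2 := by nlinarith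
  have hsq : Real.sqrt (1 - x ^ 2) ≠ 0 := by positivity
  have d1 : HasDerivAt (fun y : ℝ => 1 - π * y / 2 + (π / 2 - 1) * y ^ 2)
      (-(π * 1 / 2) + (π / 2 - 1) * ((2:ℕ) * x ^ (2 - 1))) x := by
    exact (((hasDerivAt_id x).const_mul π).div_const 2).const_sub 1 |>.add
      (((hasDerivAt_pow 2 x)).const_mul (π / 2 - 1))
  have d2 : HasDerivAt (fun y : ℝ => y * Real.arccos y)
      (1 * Real.arccos x + x * (-(1 / Real.sqrt (1 - x ^ 2)))) x :=
    (hasDerivAt_id x).mul (Real.hasDerivAt_arccos h1.ne' h2.ne)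
  have d3 : HasDerivAt (fun y : ℝ => Real.sqrt (1 - y ^ 2))
      (1 / (2 * Real.sqrt (1 - x ^ 2)) * -((2:ℕ) * x ^ (2 - 1))) x := by
    exact (Real.hasDerivAt_sqrt hs.ne').comp x
      ((hasDerivAt_pow 2 x).const_sub 1)
  have := (d1.add d2).sub d3
  convert this using 1
  · rfl
  · rfl
  · rfl
  have harc : Real.arccos x = π / 2 - Real.arcsin x := Real.arccos_eq_pi_div_two_sub_arcsin x
  rw [harc]
  field_simp
  ring


lemma arcsin_slope {a b : ℝ} (ha : 0 < a) (hab : a ≤ b) (hb : b ≤ 1) :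
    b * Real.arcsin a ≤ a * Real.arcsin b := by
  set α := Real.arcsin a with hαdef
  set β := Real.arcsin b with hβdef
  have ha1 : -1 ≤ a := by linarith
  have hb1 : -1 ≤ b := by linarith
  have hα0 : 0 < α := Real.arcsin_pos.2 ha
  have hαβ : α ≤ β := Real.monotone_arcsin hab
  have hβπ : β ≤ π / 2 := Real.arcsin_le_pi_div_two b
  have hβ0 : 0 < β := lt_of_lt_of_le hα0 hαβ
  have hsa : Real.sin α = a := Real.sin_arcsin ha1 (hab.trans hb)
  have hsb : Real.sin β = b := Real.sin_arcsin hb1 hb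
  have hc := strictConcaveOn_sin_Icc.concaveOn.2
    (show β ∈ Icc 0 π from ⟨hβ0.le, by linarith [Real.pi_pos]⟩)
    (show (0:ℝ) ∈ Icc 0 π from ⟨le_rfl, Real.pi_pos.le⟩)
    (show (0:ℝ) ≤ α / β by positivity)
    (show (0:ℝ) ≤ 1 - α / β by
      rw [sub_nonneg]; exact div_le_one_of_le₀ hαβ hβ0.le)
    (by ring)
  simp only [smul_eq_mul, mul_zero, add_zero, Real.sin_zero] at hc
  rw [div_mul_cancel₀ _ hβ0.ne'] at hc
  have : α / β * Real.sin β ≤ Real.sin α := by linarith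
  rw [hsa, hsb] at this
  have h2 := mul_le_mul_of_nonneg_right this hβ0.le
  have h3 : α / β * b * β = b * α := by field_simp
  rw [h3] at h2
  exact h2

lemma hfun_zero : hfun 0 = 0 := by simp [hfun]

lemma hfun_one : hfun 1 = 0 := by
  simp [hfun, Real.arccos_one]

lemma hfun_nonneg {k : ℝ} (hk0 : 0 ≤ k) (hk1 : k ≤ 1) : 0 ≤ hfun k := by
  have hcont : ContinuousOn hfun (Icc (-1) 1) := by
    have : Continuous hfun := by
      unfold hfun
      continuity
    exact this.continuousOn
  by_cases hc : Real.arcsin k ≤ (π - 2) * k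
  · have mono : MonotoneOn hfun (Icc 0 k) := by
      apply monotoneOn_of_deriv_nonneg (convex_Icc 0 k)
        (hcont.mono (Icc_subset_Icc (by norm_num) hk1))
      · intro x hx
        rw [interior_Icc] at hx
        exact (hfun_deriv (by linarith [hx.1]) (by linarith [hx.2, hk1])).differentiableAt.differentiableWithinAt
      · intro x hx
        rw [interior_Icc] at hx
        obtain ⟨hx0, hxk⟩ := hx
        rw [(hfun_deriv (by linarith) (by linarith)).deriv]
        have hs := arcsin_slope hx0 hxk.le hk1
        have hπ : (2:ℝ) < π := by
          have := Real.pi_gt_three; linarith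
        have hk0' : 0 < k := hx0.trans hxk
        nlinarith [Real.arcsin_nonneg.2 hk0]
    have := mono (left_mem_Icc.2 hk0) (right_mem_Icc.2 hk0) hk0
    rwa [hfun_zero] at this
  · push_neg at hc
    have hk0' : 0 < k := by
      by_contra h
      push_neg at h
      have : k = 0 := le_antisymm h hk0
      rw [this] at hc; simp at hc
    have anti : AntitoneOn hfun (Icc k 1) := by
      apply antitoneOn_of_deriv_nonpos (convex_Icc k 1)
        (hcont.mono (Icc_subset_Icc (by linarith) le_rfl))
      · intro x hx
        rw [interior_Icc] at hx
        exact (hfun_deriv (by linarith [hx.1]) hx.2).differentiableAt.differentiableWithinAt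
      · intro x hx
        rw [interior_Icc] at hx
        obtain ⟨hkx, hx1⟩ := hx
        rw [(hfun_deriv (by linarith) (by linarith)).deriv]
        have hs := arcsin_slope hk0' hkx.le hx1.le
        nlinarith
    have := anti (left_mem_Icc.2 hk1) (right_mem_Icc.2 hk1) hk1
    rwa [hfun_one] at this

lemma hfun_neg (x : ℝ) : hfun (-x) = hfun x := by
  simp [hfun, Real.arccos_neg]; ring

theorem stmt_0 (k : ℝ) (hk : k ∈ Set.Icc (-1 : ℝ) 1) :
    ((π - Real.arccos k) / π) * k + Real.sqrt (1 - k ^ 2) / π ≤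
      1 / π + k / 2 + (1 / 2 - 1 / π) * k ^ 2 := by
  obtain ⟨hk1, hk2⟩ := hk
  have hnn : 0 ≤ hfun k := by
    rcases le_or_gt 0 k with h | h
    · exact hfun_nonneg h hk2
    · rw [← hfun_neg k]
      exact hfun_nonneg (by linarith) (by linarith)
  have hπ : (0:ℝ) < π := Real.pi_pos
  have heq : (1 / π + k / 2 + (1 / 2 - 1 / π) * k ^ 2) -
      (((π - Real.arccos k) / π) * k + Real.sqrt (1 - k ^ 2) / π) = hfun k / π := by
    unfold hfun
    field_simp
    ring
  have : 0 ≤ hfun k / π := div_nonneg hnn hπ.le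
  linarith
end

section
/- For any real number k in [-1,0], (1/2) + k/π - (1/2 - 1/π)·k² ≤ (π - arccos(k))/π ≤ 1/2 - k/π. -/
open Real

set_option maxHeartbeats 1000000 in
lemma arcsin_key (t : ℝ) (h0 : 0 ≤ t) (h1 : t ≤ 1) :
    Real.arcsin t ≤ t + (π / 2 - 1) * t ^ 2 := by
  have hpi : π > 3.14 := by linarith [Real.pi_gt_d6]
  have hpi' : π < 3.15 := by linarith [Real.pi_lt_d2]
  rcases eq_or_lt_of_le h0 with h | ht
  · simp [← h]
  rcases le_or_gt t 0.6 with hc | hc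
  · -- tangent bound case
    have h1' : t < 1 := lt_of_le_of_lt hc (by norm_num)
    have hpos := Real.arcsin_pos.2 ht
    have hlt := Real.arcsin_lt_pi_div_two.2 h1'
    have htan := Real.lt_tan hpos hlt
    rw [Real.tan_arcsin] at htan
    have hs : (0:ℝ) < Real.sqrt (1 - t ^ 2) := Real.sqrt_pos.2 (by nlinarith)
    have hs2 : Real.sqrt (1 - t ^ 2) ^ 2 = 1 - t ^ 2 := Real.sq_sqrt (by nlinarith)
    have hc1 : (0.57:ℝ) ≤ π/2 - 1 := by linarith
    have hc2 : π/2 - 1 ≤ (0.575:ℝ) := by linarith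
    have hkey : 1 ≤ (1 + (π/2 - 1) * t) * Real.sqrt (1 - t ^ 2) := by
      have hsq : 1 ≤ ((1 + (π/2 - 1) * t) * Real.sqrt (1 - t ^ 2)) ^ 2 := by
        rw [mul_pow, hs2]
        nlinarith [mul_nonneg ht.le ht.le, mul_nonneg (mul_nonneg ht.le ht.le) ht.le,
          mul_nonneg (sub_nonneg.2 hc) ht.le, sq_nonneg (π/2 - 1),
          mul_nonneg (mul_nonneg (sub_nonneg.2 hc) ht.le) ht.le]
      nlinarith [mul_pos (show (0:ℝ) < 1 + (π/2-1)*t by nlinarith) hs]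
    have hd : t / Real.sqrt (1 - t ^ 2) ≤ t + (π/2-1)*t^2 := by
      rw [div_le_iff₀ hs]
      nlinarith
    linarith
  · -- sqrt bound case
    have ha0 : 0 ≤ Real.arccos t := Real.arccos_nonneg t
    have hcos : 1 - Real.arccos t ^ 2 / 2 ≤ t := by
      have := Real.one_sub_sq_div_two_le_cos (x := Real.arccos t)
      rwa [Real.cos_arccos (by linarith) h1] at this
    have hsq : Real.sqrt (2 * (1 - t)) ≤ Real.arccos t := by
      rw [show Real.arccos t = Real.sqrt (Real.arccos t ^ 2) from (Real.sqrt_sq ha0).symm]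
      exact Real.sqrt_le_sqrt (by nlinarith)
    have hu : (0:ℝ) ≤ 1 - t := by linarith
    have hu4 : 1 - t ≤ (0.4:ℝ) := by linarith
    have hc0 : (0:ℝ) ≤ π/2 - 1 := by linarith
    have hcp0 : (0:ℝ) ≤ π/2 + (π/2-1)*t := by nlinarith [mul_nonneg hc0 h0]
    have hcp : π/2 + (π/2-1)*t ≤ (2.15:ℝ) := by nlinarith [mul_nonneg hc0 hu]
    have hA0 : 0 ≤ (1 - t) * (π/2 + (π/2 - 1) * t) := mul_nonneg hu hcp0
    have hkey : (1 - t) * (π/2 + (π/2 - 1) * t) ≤ Real.sqrt (2 * (1 - t)) := by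
      have hsq' : (π/2 + (π/2-1)*t)^2 ≤ (2.15:ℝ)^2 := by nlinarith
      have e1 : (1-t)^2 * (π/2+(π/2-1)*t)^2 ≤ (1-t)^2 * 2.15^2 :=
        mul_le_mul_of_nonneg_left hsq' (sq_nonneg _)
      have e2 : (1-t)^2 ≤ 0.4*(1-t) := by nlinarith
      have h2 : ((1 - t) * (π/2 + (π/2 - 1) * t)) ^ 2 ≤ 2 * (1 - t) := by
        rw [mul_pow]; linarith [e1, e2, hu]
      have := Real.sqrt_le_sqrt h2
      rwa [Real.sqrt_sq hA0] at this
    have harcsin : Real.arcsin t = π/2 - Real.arccos t := by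
      rw [Real.arccos_eq_pi_div_two_sub_arcsin]; ring
    have hid : π/2 - (1 - t) * (π/2 + (π/2 - 1) * t) = t + (π/2 - 1) * t ^ 2 := by ring
    linarith

theorem stmt_1 (k : ℝ) (hk : k ∈ Set.Icc (-1 : ℝ) 0) :
    (1 / 2 + k / π - (1 / 2 - 1 / π) * k ^ 2 ≤ (π - Real.arccos k) / π) ∧
      (π - Real.arccos k) / π ≤ 1 / 2 - k / π := by
  obtain ⟨hk1, hk2⟩ := hk
  have hpi : (0:ℝ) < π := Real.pi_pos
  constructor
  · have hkey := arcsin_key (-k) (by linarith) (by linarith)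
    have harccos : Real.arccos k = π/2 - Real.arcsin k := Real.arccos_eq_pi_div_two_sub_arcsin k
    have hneg : Real.arcsin (-k) = -Real.arcsin k := Real.arcsin_neg k
    have h2 : Real.arccos k ≤ π/2 - k + (π/2 - 1) * k ^ 2 := by
      rw [harccos]; nlinarith [hkey, hneg]
    rw [le_div_iff₀ hpi]
    have : (1 / 2 + k / π - (1 / 2 - 1 / π) * k ^ 2) * π
        = π/2 + k - (π/2 - 1) * k ^ 2 := by field_simp
    linarith
  · have h1 : Real.arcsin k ≤ -k := le_trans (Real.arcsin_nonpos.2 hk2) (by linarith)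
    have harccos : Real.arccos k = π/2 - Real.arcsin k := Real.arccos_eq_pi_div_two_sub_arcsin k
    have h2 : π/2 + k ≤ Real.arccos k := by rw [harccos]; linarith
    rw [div_le_iff₀ hpi]
    have : (1 / 2 - k / π) * π = π/2 - k := by field_simp
    linarith
end

section
/- Let k₁, k₂ be real numbers with r := √(k₁² + k₂²) ≤ 1. Then ((π - arccos(k₁))/π)·k₁ + √(1-k₁²)/π + ((π - arccos(k₂))/π)·k₂ + √(1-k₂²)/π - ((π - arccos(r))/π)·r - √(1-r²)/π - 1/π ≤ (1/2)(k₁ + k₂ - r). -/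
open Real Set

noncomputable def Hf (x : ℝ) : ℝ := x * Real.arcsin x + Real.sqrt (1 - x ^ 2) - 1

lemma Hf_zero : Hf 0 = 0 := by simp [Hf]

lemma continuous_Hf : Continuous Hf := by
  unfold Hf
  have := Real.continuous_arcsin
  fun_prop

lemma hasDerivAt_Hf {x : ℝ} (h0 : -1 < x) (h1 : x < 1) :
    HasDerivAt Hf (Real.arcsin x) x := by
  have hx1 : (0:ℝ) < 1 - x ^ 2 := by nlinarith
  have hs : Real.sqrt (1 - x ^ 2) ≠ 0 := by positivity
  have d1 : HasDerivAt (fun y : ℝ => y * Real.arcsin y)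
      (1 * Real.arcsin x + x * (1 / Real.sqrt (1 - x ^ 2))) x :=
    (hasDerivAt_id x).mul (Real.hasDerivAt_arcsin (by linarith) (by linarith))
  have d2 : HasDerivAt (fun y : ℝ => 1 - y ^ 2) (0 - 2 * x) x := by
    simpa using (hasDerivAt_pow 2 x).const_sub (1:ℝ)
  have d3 : HasDerivAt (fun y : ℝ => Real.sqrt (1 - y ^ 2))
      (1 / (2 * Real.sqrt (1 - x ^ 2)) * (0 - 2 * x)) x :=
    (Real.hasDerivAt_sqrt hx1.ne').comp x d2
  have : HasDerivAt Hf _ x :=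
    (d1.add d3).sub_const 1
  convert this using 1
  field_simp
  ring

lemma psi_nonneg {x : ℝ} (h0 : 0 ≤ x) (h1 : x ≤ 1) :
    0 ≤ 2 - x * Real.arcsin x - 2 * Real.sqrt (1 - x ^ 2) := by
  set ψ : ℝ → ℝ := fun y => 2 - y * Real.arcsin y - 2 * Real.sqrt (1 - y ^ 2) with hψ
  have hψH : ψ = fun y => -2 * Hf y + y * Real.arcsin y := by
    funext y; simp [hψ, Hf]; ring
  have hcont : ContinuousOn ψ (Icc 0 1) := by
    rw [hψ]
    apply Continuous.continuousOn
    have := Real.continuous_arcsin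
    fun_prop
  have hmono : MonotoneOn ψ (Icc 0 1) := by
    apply monotoneOn_of_deriv_nonneg (convex_Icc 0 1) hcont
    · intro y hy
      rw [interior_Icc] at hy
      have hd : HasDerivAt ψ (-2 * Real.arcsin y +
          (1 * Real.arcsin y + y * (1 / Real.sqrt (1 - y ^ 2)))) y := by
        rw [hψH]
        exact ((hasDerivAt_Hf (by linarith [hy.1]) hy.2).const_mul (-2)).add
          ((hasDerivAt_id y).mul (Real.hasDerivAt_arcsin (by linarith [hy.1]) (ne_of_lt hy.2)))
      exact hd.differentiableAt.differentiableWithinAt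
    · intro y hy
      rw [interior_Icc] at hy
      have hy0 : 0 < y := hy.1
      have hy1 : y < 1 := hy.2
      have hx1 : (0:ℝ) < 1 - y ^ 2 := by nlinarith
      have hd : HasDerivAt ψ (-2 * Real.arcsin y +
          (1 * Real.arcsin y + y * (1 / Real.sqrt (1 - y ^ 2)))) y := by
        rw [hψH]
        exact ((hasDerivAt_Hf (by linarith) hy1).const_mul (-2)).add
          ((hasDerivAt_id y).mul (Real.hasDerivAt_arcsin (by linarith) hy1.ne))
      rw [hd.deriv]
      have htan : Real.arcsin y ≤ y / Real.sqrt (1 - y ^ 2) := by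
        rw [← Real.tan_arcsin]
        exact le_of_lt (Real.lt_tan (Real.arcsin_pos.2 hy0)
          (Real.arcsin_lt_pi_div_two.2 hy1))
      have : y * (1 / Real.sqrt (1 - y ^ 2)) = y / Real.sqrt (1 - y ^ 2) := by ring
      rw [this]
      linarith
  have h00 : ψ 0 = 0 := by simp [hψ]
  have := hmono (left_mem_Icc.2 zero_le_one) ⟨h0, h1⟩ h0
  rw [h00] at this
  exact this

lemma core {a b : ℝ} (ha : 0 ≤ a) (hab : a ≤ b) (hb : b ≤ 1) :
    b ^ 2 * Hf a ≤ a ^ 2 * Hf b := by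
  rcases eq_or_lt_of_le ha with rfl | ha0
  · simp [Hf_zero]
  rcases eq_or_lt_of_le hab with rfl | hab0
  · exact le_rfl
  -- a > 0, a < b ≤ 1
  set φ : ℝ → ℝ := fun y => Hf y / y ^ 2 with hφ
  have hcont : ContinuousOn φ (Icc a b) := by
    apply ContinuousOn.div
    · exact continuous_Hf.continuousOn
    · fun_prop
    · intro y hy
      have : 0 < y := lt_of_lt_of_le ha0 hy.1
      positivity
  have hmono : MonotoneOn φ (Icc a b) := by
    apply monotoneOn_of_deriv_nonneg (convex_Icc a b) hcont
    · intro y hy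
      rw [interior_Icc] at hy
      have hy0 : 0 < y := lt_trans ha0 hy.1
      have hy1 : y < 1 := lt_of_lt_of_le hy.2 hb
      have hd : HasDerivAt φ ((Real.arcsin y * y ^ 2 - Hf y * (2 * y)) / (y ^ 2) ^ 2) y := by
        apply HasDerivAt.div (hasDerivAt_Hf (by linarith) hy1)
        · simpa using hasDerivAt_pow 2 y
        · positivity
      exact hd.differentiableAt.differentiableWithinAt
    · intro y hy
      rw [interior_Icc] at hy
      have hy0 : 0 < y := lt_trans ha0 hy.1
      have hy1 : y < 1 := lt_of_lt_of_le hy.2 hb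
      have hd : HasDerivAt φ ((Real.arcsin y * y ^ 2 - Hf y * (2 * y)) / (y ^ 2) ^ 2) y := by
        apply HasDerivAt.div (hasDerivAt_Hf (by linarith) hy1)
        · simpa using hasDerivAt_pow 2 y
        · positivity
      rw [hd.deriv]
      apply div_nonneg _ (by positivity)
      have hpsi := psi_nonneg hy0.le hy1.le
      have : Real.arcsin y * y ^ 2 - Hf y * (2 * y)
          = y * (2 - y * Real.arcsin y - 2 * Real.sqrt (1 - y ^ 2)) := by
        simp only [Hf]; ring
      rw [this]
      positivity
  have := hmono (left_mem_Icc.2 hab) (right_mem_Icc.2 hab) hab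
  simp only [hφ] at this
  rw [div_le_div_iff₀ (pow_pos ha0 2) (pow_pos (ha0.trans hab0) 2)] at this
  linarith

lemma Hf_abs (x : ℝ) : Hf x = Hf |x| := by
  rcases le_or_gt 0 x with h | h
  · rw [abs_of_nonneg h]
  · rw [abs_of_neg h]
    simp only [Hf, Real.arcsin_neg, neg_sq]
    ring

theorem stmt_2 (k₁ k₂ : ℝ) (r : ℝ) (hr : r = Real.sqrt (k₁ ^ 2 + k₂ ^ 2)) (hr1 : r ≤ 1) :
    ((π - Real.arccos k₁) / π) * k₁ + Real.sqrt (1 - k₁ ^ 2) / π +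
        ((π - Real.arccos k₂) / π) * k₂ + Real.sqrt (1 - k₂ ^ 2) / π -
        ((π - Real.arccos r) / π) * r - Real.sqrt (1 - r ^ 2) / π - 1 / π ≤
      (1 / 2) * (k₁ + k₂ - r) := by
  have hr0 : 0 ≤ r := hr ▸ Real.sqrt_nonneg _
  have hr2 : r ^ 2 = k₁ ^ 2 + k₂ ^ 2 := by
    rw [hr, Real.sq_sqrt (by positivity)]
  have hk1 : |k₁| ≤ r := by
    rw [hr, ← Real.sqrt_sq_eq_abs]
    exact Real.sqrt_le_sqrt (by nlinarith)
  have hk2 : |k₂| ≤ r := by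
    rw [hr, ← Real.sqrt_sq_eq_abs]
    exact Real.sqrt_le_sqrt (by nlinarith)
  have key : Hf k₁ + Hf k₂ ≤ Hf r := by
    rcases eq_or_lt_of_le hr0 with rfl | hrpos
    · have h1 : k₁ = 0 := by nlinarith [sq_nonneg k₁, sq_nonneg k₂]
      have h2 : k₂ = 0 := by nlinarith [sq_nonneg k₁, sq_nonneg k₂]
      simp [h1, h2, Hf_zero]
    · have c1 := core (abs_nonneg k₁) hk1 hr1
      have c2 := core (abs_nonneg k₂) hk2 hr1
      rw [← Hf_abs, sq_abs] at c1 c2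
      have hrw : k₁ ^ 2 * Hf r + k₂ ^ 2 * Hf r = r ^ 2 * Hf r := by rw [hr2]; ring
      have hsum : r ^ 2 * (Hf k₁ + Hf k₂) ≤ r ^ 2 * Hf r := by linarith
      exact le_of_mul_le_mul_left hsum (by positivity)
  have hπ : (0:ℝ) < π := Real.pi_pos
  rw [← sub_nonpos]
  have heq : ((π - Real.arccos k₁) / π) * k₁ + Real.sqrt (1 - k₁ ^ 2) / π +
        ((π - Real.arccos k₂) / π) * k₂ + Real.sqrt (1 - k₂ ^ 2) / π -
        ((π - Real.arccos r) / π) * r - Real.sqrt (1 - r ^ 2) / π - 1 / π -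
        (1 / 2) * (k₁ + k₂ - r) = (Hf k₁ + Hf k₂ - Hf r) / π := by
    simp only [Hf, Real.arccos_eq_pi_div_two_sub_arcsin]
    field_simp
    ring
  rw [heq]
  exact div_nonpos_of_nonpos_of_nonneg (by linarith) hπ.le
end

section
/- Let k₁, k₂ be real numbers with r := √(k₁² + k₂²) ≤ 1. Then -arccos(k₁) - arccos(k₂) + arccos(r) + π/2 ≤ k₁ + k₂ - r. -/
open Real
open Set


-- φ(x) ≤ x for x ≤ 0: arcsin x ≤ x
lemma aux_arcsin_le_self {x : ℝ} (hx0 : x ≤ 0) (hx1 : -1 ≤ x) : arcsin x ≤ x := by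
  have h1 : Real.arcsin x ≤ 0 := Real.arcsin_nonpos.2 hx0
  have h2 := Real.le_sin h1
  rwa [Real.sin_arcsin hx1 (by linarith)] at h2

lemma aux_self_le_arcsin {x : ℝ} (hx0 : 0 ≤ x) (hx1 : x ≤ 1) : x ≤ arcsin x := by
  have h1 : 0 ≤ Real.arcsin x := Real.arcsin_nonneg.2 hx0
  have h2 := Real.sin_le h1
  rwa [Real.sin_arcsin (by linarith) hx1] at h2

-- Lemma B: φ monotone
lemma aux_phi_mono {k r : ℝ} (hk : -1 ≤ k) (hkr : k ≤ r) (hr : r ≤ 1) :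
    arcsin k - k ≤ arcsin r - r := by
  set a := arcsin r
  set b := arcsin k
  have hba : b ≤ a := Real.monotone_arcsin hkr
  have hsa : Real.sin a = r := Real.sin_arcsin (by linarith) hr
  have hsb : Real.sin b = k := Real.sin_arcsin hk (by linarith)
  have key : Real.sin a - Real.sin b ≤ a - b := by
    rw [Real.sin_sub_sin]
    have h1 : Real.sin ((a - b) / 2) ≤ (a - b) / 2 := Real.sin_le (by linarith)
    have h2 : Real.sin ((a - b) / 2) ≥ 0 := by
      apply Real.sin_nonneg_of_nonneg_of_le_pi (by linarith)
      have := Real.arcsin_le_pi_div_two r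
      have := Real.neg_pi_div_two_le_arcsin k
      have := Real.pi_pos
      simp only [a, b] at *
      linarith
    have h3 : Real.cos ((a + b) / 2) ≤ 1 := Real.cos_le_one _
    have h4 : -1 ≤ Real.cos ((a + b) / 2) := Real.neg_one_le_cos _
    nlinarith
  linarith [key, hsa ▸ hsb ▸ key]

noncomputable def auxF : ℝ → ℝ := fun y => y / Real.sqrt (1 - y^2) + 2*y - 3*Real.arcsin y

lemma auxF_deriv {y : ℝ} (hy : y^2 < 1) :
    HasDerivAt auxF (1/Real.sqrt (1-y^2)^3 + 2 - 3/Real.sqrt (1-y^2)) y := by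
  have hpos : 0 < 1 - y^2 := by linarith
  have hs : 0 < Real.sqrt (1 - y^2) := Real.sqrt_pos.2 hpos
  have hsq : Real.sqrt (1-y^2)^2 = 1 - y^2 := Real.sq_sqrt hpos.le
  have h1 : HasDerivAt (fun z : ℝ => 1 - z^2) (-(2*y)) y := by
    simpa using ((hasDerivAt_pow 2 y).const_sub 1)
  have h2 : HasDerivAt (fun z : ℝ => Real.sqrt (1 - z^2)) (1 / (2 * Real.sqrt (1-y^2)) * (-(2*y))) y :=
    (Real.hasDerivAt_sqrt hpos.ne').comp y h1
  have h3 : HasDerivAt (fun z : ℝ => z / Real.sqrt (1 - z^2))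
      ((1 * Real.sqrt (1-y^2) - y * (1 / (2 * Real.sqrt (1-y^2)) * (-(2*y)))) / (Real.sqrt (1-y^2))^2) y :=
    (hasDerivAt_id y).div h2 hs.ne'
  have h4 : HasDerivAt Real.arcsin (1 / Real.sqrt (1 - y^2)) y :=
    Real.hasDerivAt_arcsin (by nlinarith) (by nlinarith)
  have h5 := (h3.add ((hasDerivAt_id y).const_mul 2)).sub (h4.const_mul 3)
  refine h5.congr_deriv ?_
  set s := Real.sqrt (1 - y^2) with hsdef
  have e1 : 1 * s - y * (1 / (2 * s) * (-(2*y))) = 1/s := by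
    field_simp [hs.ne']
    linear_combination hsq
  rw [e1]
  rw [div_div, ← pow_succ']
  ring

lemma aux_L1 {x : ℝ} (hx0 : 0 ≤ x) (hx1 : x < 1) :
    3 * Real.arcsin x ≤ x / Real.sqrt (1 - x^2) + 2*x := by
  rcases eq_or_lt_of_le hx0 with h | h
  · simp [← h]
  have key : MonotoneOn auxF (Icc 0 x) := by
    have hint : interior (Icc (0:ℝ) x) = Ioo 0 x := interior_Icc
    apply monotoneOn_of_deriv_nonneg (convex_Icc 0 x)
    · -- ContinuousOn
      apply ContinuousOn.sub (ContinuousOn.add (ContinuousOn.div continuousOn_id ?_ ?_) ?_) ?_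
      · exact (Real.continuous_sqrt.comp (by continuity)).continuousOn
      · intro z hz
        simp only [mem_Icc] at hz
        have : (0:ℝ) < 1 - z^2 := by nlinarith
        exact (Real.sqrt_pos.2 this).ne'
      · exact (continuous_const.mul continuous_id).continuousOn
      · exact (continuous_const.mul Real.continuous_arcsin).continuousOn
    · rw [hint]
      intro z hz
      have hz2 : z^2 < 1 := by rcases hz with ⟨h1, h2⟩; nlinarith
      exact (auxF_deriv hz2).differentiableAt.differentiableWithinAt
    · rw [hint]
      intro z hz
      have hz2 : z^2 < 1 := by rcases hz with ⟨h1, h2⟩; nlinarith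
      rw [(auxF_deriv hz2).deriv]
      have hpos : 0 < 1 - z^2 := by linarith
      have hs : 0 < Real.sqrt (1 - z^2) := Real.sqrt_pos.2 hpos
      have hs1 : Real.sqrt (1 - z^2) < 1 := by
        rw [Real.sqrt_lt' one_pos]
        rcases hz with ⟨h1, _⟩; nlinarith
      set s := Real.sqrt (1 - z^2)
      have key2 : 1 + 2*s^3 - 3*s^2 ≥ 0 := by nlinarith [sq_nonneg (1-s), hs.le]
      have h6 : 1/s^3 + 2 - 3/s = (1 + 2*s^3 - 3*s^2) / s^3 := by field_simp
      rw [h6]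
      positivity
  have h0 : auxF 0 = 0 := by simp [auxF]
  have := key (left_mem_Icc.2 hx0) (right_mem_Icc.2 hx0) hx0
  rw [h0] at this
  simp only [auxF] at this
  linarith

lemma aux_L2 {a x : ℝ} (ha : 0 ≤ a) (hax : a ≤ x) (hx : x < 1) :
    x^2 * (1/Real.sqrt (1-a^2) - 1) ≤ a^2 * (1/Real.sqrt (1-x^2) - 1) := by
  have hpa : 0 < 1 - a^2 := by nlinarith
  have hpx : 0 < 1 - x^2 := by nlinarith
  set sa := Real.sqrt (1-a^2) with hsa
  set sx := Real.sqrt (1-x^2) with hsx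
  have ea : sa^2 = 1 - a^2 := Real.sq_sqrt hpa.le
  have ex : sx^2 = 1 - x^2 := Real.sq_sqrt hpx.le
  have hsa0 : 0 < sa := Real.sqrt_pos.2 hpa
  have hsx0 : 0 < sx := Real.sqrt_pos.2 hpx
  have hsa1 : sa ≤ 1 := by nlinarith
  have hsx1 : sx ≤ 1 := by nlinarith
  have hord : sx ≤ sa := Real.sqrt_le_sqrt (by nlinarith)
  have h1 : (1/sa - 1) = (1-sa)/sa := by field_simp
  have h2 : (1/sx - 1) = (1-sx)/sx := by field_simp
  rw [h1, h2, ← mul_div_assoc, ← mul_div_assoc, div_le_div_iff₀ hsa0 hsx0]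
  have hdiff : 0 ≤ (1+sa)*sa - (1+sx)*sx := by nlinarith
  have hprod : 0 ≤ (1-sa)*(1-sx)*((1+sa)*sa - (1+sx)*sx) :=
    mul_nonneg (mul_nonneg (by linarith) (by linarith)) hdiff
  have heq : a ^ 2 * (1 - sx) * sa - x ^ 2 * (1 - sa) * sx
      = (1-sa)*(1-sx)*((1+sa)*sa - (1+sx)*sx) := by
    linear_combination ((1-sx)*sa)*ea - ((1-sa)*sx)*ex
  linarith [hprod, heq]

lemma aux_key {a r : ℝ} (ha : 0 < a) (har : a ≤ r) (hr : r ≤ 1) :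
    r^3 * (Real.arcsin a - a) ≤ a^3 * (Real.arcsin r - r) := by
  have ha1 : a < 1 ∨ a = 1 := by rcases lt_or_eq_of_le (har.trans hr) with h|h; exacts [Or.inl h, Or.inr h]
  rcases ha1 with ha1 | ha1
  · set G : ℝ → ℝ := fun x => a^3*(Real.arcsin x - x) - x^3*(Real.arcsin a - a) with hG
    have hderiv : ∀ y ∈ Ioo a 1, HasDerivAt G
        (a^3*(1/Real.sqrt (1-y^2) - 1) - 3*y^2*(Real.arcsin a - a)) y := by
      intro y hy
      obtain ⟨hy1, hy2⟩ := hy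
      have h4 : HasDerivAt Real.arcsin (1 / Real.sqrt (1 - y^2)) y :=
        Real.hasDerivAt_arcsin (by nlinarith) (by nlinarith)
      have h5 := ((h4.sub (hasDerivAt_id y)).const_mul (a^3)).sub
        ((hasDerivAt_pow 3 y).mul_const (Real.arcsin a - a))
      refine h5.congr_deriv ?_
      all_goals push_cast
      all_goals ring
    have key : MonotoneOn G (Icc a 1) := by
      apply monotoneOn_of_deriv_nonneg (convex_Icc a 1)
      · apply ContinuousOn.sub
        · exact (continuous_const.mul (Real.continuous_arcsin.sub continuous_id)).continuousOn
        · exact ((continuous_pow 3).mul continuous_const).continuousOn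
      · rw [interior_Icc]
        exact fun y hy => (hderiv y hy).differentiableAt.differentiableWithinAt
      · rw [interior_Icc]
        intro y hy
        rw [(hderiv y hy).deriv]
        obtain ⟨hy1, hy2⟩ := hy
        have hL1 : 3 * Real.arcsin a ≤ a / Real.sqrt (1 - a^2) + 2*a := aux_L1 ha.le ha1
        have hL2 : y^2 * (1/Real.sqrt (1-a^2) - 1) ≤ a^2 * (1/Real.sqrt (1-y^2) - 1) :=
          aux_L2 ha.le hy1.le hy2
        have hsa0 : 0 < Real.sqrt (1-a^2) := Real.sqrt_pos.2 (by nlinarith)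
        have e : a / Real.sqrt (1-a^2) - a = a * (1/Real.sqrt (1-a^2) - 1) := by
          field_simp
        nlinarith [hL1, hL2, sq_nonneg y, ha.le, e]
      
    have h0 : G a = 0 := by simp [hG]
    have := key (left_mem_Icc.2 (har.trans hr)) ⟨har, hr⟩ har
    rw [h0] at this
    simp only [hG] at this
    linarith
  · subst ha1
    have : r = 1 := le_antisymm hr har
    subst this
    simp
theorem stmt_3 (k₁ k₂ : ℝ) (r : ℝ) (hr : r = Real.sqrt (k₁ ^ 2 + k₂ ^ 2)) (hr1 : r ≤ 1) :
    -Real.arccos k₁ - Real.arccos k₂ + Real.arccos r + π / 2 ≤ k₁ + k₂ - r := by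
  have hr0 : 0 ≤ r := hr ▸ Real.sqrt_nonneg _
  have hr2 : r^2 = k₁^2 + k₂^2 := by
    rw [hr]; exact Real.sq_sqrt (by positivity)
  have hk1r : k₁ ≤ r := by
    have : |k₁| ≤ r := by
      rw [hr, ← Real.sqrt_sq_eq_abs]
      exact Real.sqrt_le_sqrt (by nlinarith)
    exact (le_abs_self k₁).trans this
  have hk2r : k₂ ≤ r := by
    have : |k₂| ≤ r := by
      rw [hr, ← Real.sqrt_sq_eq_abs]
      exact Real.sqrt_le_sqrt (by nlinarith)
    exact (le_abs_self k₂).trans this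
  have hk1m : -1 ≤ k₁ := by nlinarith [neg_abs_le k₁, abs_nonneg k₁, sq_abs k₁]
  have hk2m : -1 ≤ k₂ := by nlinarith [neg_abs_le k₂, abs_nonneg k₂, sq_abs k₂]
  have hk1M : k₁ ≤ 1 := hk1r.trans hr1
  have hk2M : k₂ ≤ 1 := hk2r.trans hr1
  rw [Real.arccos, Real.arccos, Real.arccos]
  have key : (Real.arcsin k₁ - k₁) + (Real.arcsin k₂ - k₂) ≤ Real.arcsin r - r := by
    rcases le_or_gt k₁ 0 with h1 | h1
    · have e1 : Real.arcsin k₁ - k₁ ≤ 0 := by linarith [aux_arcsin_le_self h1 hk1m]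
      have e2 : Real.arcsin k₂ - k₂ ≤ Real.arcsin r - r := aux_phi_mono hk2m hk2r hr1
      linarith
    rcases le_or_gt k₂ 0 with h2 | h2
    · have e1 : Real.arcsin k₂ - k₂ ≤ 0 := by linarith [aux_arcsin_le_self h2 hk2m]
      have e2 : Real.arcsin k₁ - k₁ ≤ Real.arcsin r - r := aux_phi_mono hk1m hk1r hr1
      linarith
    · have hrpos : 0 < r := lt_of_lt_of_le h1 hk1r
      have K1 := aux_key h1 hk1r hr1
      have K2 := aux_key h2 hk2r hr1
      have hphir : 0 ≤ Real.arcsin r - r := by linarith [aux_self_le_arcsin hr0 hr1]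
      have hcube : k₁^3 + k₂^3 ≤ r^3 := by nlinarith
      have : r^3 * ((Real.arcsin k₁ - k₁) + (Real.arcsin k₂ - k₂)) ≤ r^3 * (Real.arcsin r - r) := by
        calc r^3 * ((Real.arcsin k₁ - k₁) + (Real.arcsin k₂ - k₂))
            ≤ k₁^3 * (Real.arcsin r - r) + k₂^3 * (Real.arcsin r - r) := by linarith
          _ = (k₁^3 + k₂^3) * (Real.arcsin r - r) := by ring
          _ ≤ r^3 * (Real.arcsin r - r) := by nlinarith
      have h3 : 0 < r^3 := by positivity
      exact le_of_mul_le_mul_left this h3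
  linarith
end

section
/- Let k₁, k₂ ≥ 0 be real numbers with √(k₁² + k₂²) ≤ 1. Then arccos(k₁) + arccos(k₂) ≤ arccos(√(k₁² + k₂²)) + π/2. -/
open Real

theorem stmt_4 (k₁ k₂ : ℝ) (h₁ : 0 ≤ k₁) (h₂ : 0 ≤ k₂)
    (hr : Real.sqrt (k₁ ^ 2 + k₂ ^ 2) ≤ 1) :
    Real.arccos k₁ + Real.arccos k₂ ≤ Real.arccos (Real.sqrt (k₁ ^ 2 + k₂ ^ 2)) + π / 2 := by
  set s := Real.sqrt (k₁ ^ 2 + k₂ ^ 2) with hs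
  have hs0 : 0 ≤ s := Real.sqrt_nonneg _
  have hssq : s ^ 2 = k₁ ^ 2 + k₂ ^ 2 := Real.sq_sqrt (by positivity)
  have hsum : k₁ ^ 2 + k₂ ^ 2 ≤ 1 := by nlinarith
  have hk1 : k₁ ≤ 1 := by nlinarith [sq_nonneg k₂]
  have hk2 : k₂ ≤ 1 := by nlinarith [sq_nonneg k₁]
  set a := Real.sqrt (1 - k₁ ^ 2) with ha
  set b := Real.sqrt (1 - k₂ ^ 2) with hb
  have ha0 : 0 ≤ a := Real.sqrt_nonneg _
  have hb0 : 0 ≤ b := Real.sqrt_nonneg _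
  have hasq : a ^ 2 = 1 - k₁ ^ 2 := Real.sq_sqrt (by nlinarith [sq_nonneg k₂])
  have hbsq : b ^ 2 = 1 - k₂ ^ 2 := Real.sq_sqrt (by nlinarith [sq_nonneg k₁])
  have hab : k₁ * k₂ ≤ a * b := by
    nlinarith [sq_nonneg (a*b - k₁*k₂), sq_nonneg (a*b + k₁*k₂), mul_nonneg ha0 hb0,
      mul_nonneg h₁ h₂]
  have hkey : s ≤ k₁ * b + k₂ * a := by
    have h4 : k₁ * k₂ * (k₁ * k₂) ≤ k₁ * k₂ * (a * b) :=
      mul_le_mul_of_nonneg_left hab (mul_nonneg h₁ h₂)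
    nlinarith [mul_nonneg h₁ hb0, mul_nonneg h₂ ha0, hs0, h4, hssq, hasq, hbsq]
  set S := Real.arcsin k₁ + Real.arcsin k₂ with hS
  have hk2a : k₂ ≤ a := by
    have : k₂ = Real.sqrt (k₂ ^ 2) := (Real.sqrt_sq h₂).symm
    rw [this, ha]
    exact Real.sqrt_le_sqrt (by nlinarith)
  have hSle : S ≤ π / 2 := by
    have h1 : Real.arcsin k₂ ≤ Real.arcsin a :=
      Real.monotone_arcsin hk2a
    have h2 : Real.arcsin a = Real.arccos k₁ := (Real.arccos_eq_arcsin h₁).symm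
    have h3 : Real.arccos k₁ = π / 2 - Real.arcsin k₁ := Real.arccos_eq_pi_div_two_sub_arcsin _
    simp only [hS]
    linarith
  have hSge : -(π / 2) ≤ S := by
    have := Real.arcsin_nonneg.2 h₁
    have := Real.arcsin_nonneg.2 h₂
    have := Real.pi_pos
    linarith
  have hsinS : Real.sin S = k₁ * b + k₂ * a := by
    rw [hS, Real.sin_add, Real.sin_arcsin (by linarith) hk1, Real.sin_arcsin (by linarith) hk2,
      Real.cos_arcsin, Real.cos_arcsin]
    ring
  have hmain : Real.arcsin s ≤ S := by
    calc Real.arcsin s ≤ Real.arcsin (Real.sin S) :=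
          Real.monotone_arcsin (by rw [hsinS]; exact hkey)
      _ = S := Real.arcsin_sin hSge hSle
  have e1 : Real.arccos k₁ = π / 2 - Real.arcsin k₁ := Real.arccos_eq_pi_div_two_sub_arcsin _
  have e2 : Real.arccos k₂ = π / 2 - Real.arcsin k₂ := Real.arccos_eq_pi_div_two_sub_arcsin _
  have e3 : Real.arccos s = π / 2 - Real.arcsin s := Real.arccos_eq_pi_div_two_sub_arcsin _
  rw [e1, e2, e3]
  simp only [hS] at hmain
  linarith
end

section
/- Let w, Δw ∈ ℝ^d with w ≠ 0 and ‖Δw‖ ≤ ‖w‖/2. Then 0 ≤ ‖w - Δw‖ - (‖w‖ - ⟨w, Δw⟩/‖w‖) ≤ ‖Δw‖²/‖w‖. -/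
theorem stmt_8 (d : ℕ) (w Δw : EuclideanSpace ℝ (Fin d))
    (hw : w ≠ 0) (hΔ : ‖Δw‖ ≤ ‖w‖ / 2) :
    0 ≤ ‖w - Δw‖ - (‖w‖ - (inner ℝ w Δw : ℝ) / ‖w‖) ∧
      ‖w - Δw‖ - (‖w‖ - (inner ℝ w Δw : ℝ) / ‖w‖) ≤ ‖Δw‖ ^ 2 / ‖w‖ := by
  set n := ‖w‖ with hn
  set m := ‖Δw‖ with hm
  set s := ‖w - Δw‖ with hs
  have hnpos : 0 < n := norm_pos_iff.mpr hw
  have hmnn : 0 ≤ m := norm_nonneg _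
  have hsnn : 0 ≤ s := norm_nonneg _
  have hsq : s ^ 2 = n ^ 2 - 2 * (inner ℝ w Δw : ℝ) + m ^ 2 := by
    rw [hs, hn, hm]
    rw [@norm_sub_sq_real]
  have hcs : |(inner ℝ w Δw : ℝ)| ≤ n * m := abs_real_inner_le_norm w Δw
  have hcs1 : (inner ℝ w Δw : ℝ) ≤ n * m := (abs_le.mp hcs).2
  have hcs2 : -(n * m) ≤ (inner ℝ w Δw : ℝ) := (abs_le.mp hcs).1
  have htri : n - m ≤ s := by
    have h := norm_sub_norm_le w (w - Δw)
    rw [sub_sub_cancel] at h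
    linarith
  set t : ℝ := (inner ℝ w Δw : ℝ) / n with ht
  have hti : (inner ℝ w Δw : ℝ) = t * n := by rw [ht, div_mul_cancel₀ _ hnpos.ne']
  have ht1 : t ≤ m := by
    rw [ht, div_le_iff₀ hnpos]; nlinarith
  have ht2 : -m ≤ t := by
    rw [ht, le_div_iff₀ hnpos]; nlinarith
  set u : ℝ := m ^ 2 / n with hu
  have hui : m ^ 2 = u * n := by rw [hu, div_mul_cancel₀ _ hnpos.ne']
  have hunn : 0 ≤ u := div_nonneg (sq_nonneg m) hnpos.le
  constructor
  · nlinarith [sq_nonneg (s - (n - t)), sq_nonneg (s + (n - t)), mul_nonneg hsnn hmnn]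
  · nlinarith [mul_nonneg hunn (by nlinarith : (0:ℝ) ≤ s - t), sq_nonneg t,
      (by nlinarith : n ≤ s + (n - t))]
end

section
/- Let w, Δw ∈ ℝ^d with w ≠ 0 and ‖Δw‖ ≤ ‖w‖/2. Then ‖ (w - Δw)/‖w - Δw‖ - w/‖w‖ + (1/‖w‖)(I_d - w wᵀ/‖w‖²) Δw ‖ ≤ 5‖Δw‖²/‖w‖², where (I_d - w wᵀ/‖w‖²) Δw = Δw - (⟨w,Δw⟩/‖w‖²) w. -/
/-!
Write `a = ‖w‖`, `b = ‖w - Δw‖`, `δ = ‖Δw‖`, `c = ⟪w, Δw⟫` and `k = c / a³`. The error vector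
rearranges to `(b⁻¹ - a⁻¹ - k) • (w - Δw) - k • Δw`, so it suffices to bound the two real
coefficients. By the polarization identity `2c = a² + δ² - b²`, the first one times `b` equals
`((a - b)²(2a + b) - bδ²) / (2a³)`, which is `O(δ²/a²)` because `|a - b| ≤ δ ≤ a/2`; the second
is `O(δ/a²)` by Cauchy–Schwarz.
-/

lemma abs_inv_sub_inv_sub_div_mul_le {a b δ c : ℝ} (ha : 0 < a) (hδa : δ ≤ a / 2)
    (hab : |a - b| ≤ δ) (hc : 2 * c = a ^ 2 + δ ^ 2 - b ^ 2) :
    |b⁻¹ - a⁻¹ - c / a ^ 3| * b ≤ 4 * δ ^ 2 / a ^ 2 := by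
  obtain ⟨hba, hab'⟩ := abs_le.mp hab
  have hb : 0 < b := by linarith
  have hsq : (a - b) ^ 2 ≤ δ ^ 2 := sq_le_sq' hba hab'
  have hexpand : (b⁻¹ - a⁻¹ - c / a ^ 3) * b
      = ((a - b) ^ 2 * (2 * a + b) - b * δ ^ 2) / (2 * a ^ 3) := by
    field_simp
    linear_combination (-b) * hc
  have hnum : |(a - b) ^ 2 * (2 * a + b) - b * δ ^ 2| ≤ 8 * a * δ ^ 2 :=
    abs_le.mpr ⟨by nlinarith, by nlinarith⟩
  calc |b⁻¹ - a⁻¹ - c / a ^ 3| * b = |(b⁻¹ - a⁻¹ - c / a ^ 3) * b| := by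
        rw [abs_mul, abs_of_pos hb]
    _ = |(a - b) ^ 2 * (2 * a + b) - b * δ ^ 2| / (2 * a ^ 3) := by
        rw [hexpand, abs_div, abs_of_pos (by positivity : (0 : ℝ) < 2 * a ^ 3)]
    _ ≤ 8 * a * δ ^ 2 / (2 * a ^ 3) := by gcongr
    _ = 4 * δ ^ 2 / a ^ 2 := by field_simp; ring

lemma abs_div_pow_three_mul_le {a δ c : ℝ} (ha : 0 < a) (hc : |c| ≤ a * δ) :
    |c / a ^ 3| * δ ≤ δ ^ 2 / a ^ 2 := by
  have hδ : 0 ≤ δ := nonneg_of_mul_nonneg_right ((abs_nonneg c).trans hc) ha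
  calc |c / a ^ 3| * δ = |c| / a ^ 3 * δ := by rw [abs_div, abs_of_pos (pow_pos ha 3)]
    _ ≤ a * δ / a ^ 3 * δ := by gcongr
    _ = δ ^ 2 / a ^ 2 := by field_simp

theorem norm_inv_norm_smul_sub_linearization_le {E : Type*} [NormedAddCommGroup E]
    [InnerProductSpace ℝ E] {w Δw : E} (hw : w ≠ 0) (hΔ : ‖Δw‖ ≤ ‖w‖ / 2) :
    ‖‖w - Δw‖⁻¹ • (w - Δw) - ‖w‖⁻¹ • w
        + ‖w‖⁻¹ • (Δw - ((inner ℝ w Δw : ℝ) / ‖w‖ ^ 2) • w)‖ ≤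
      5 * ‖Δw‖ ^ 2 / ‖w‖ ^ 2 := by
  set a := ‖w‖
  set b := ‖w - Δw‖
  set δ := ‖Δw‖
  set c := (inner ℝ w Δw : ℝ)
  have ha : 0 < a := norm_pos_iff.mpr hw
  have hab : |a - b| ≤ δ := by simpa using abs_norm_sub_norm_le w (w - Δw)
  have hc : 2 * c = a ^ 2 + δ ^ 2 - b ^ 2 := by rw [norm_sub_sq_real]; ring
  calc _ = ‖(b⁻¹ - a⁻¹ - c / a ^ 3) • (w - Δw) - (c / a ^ 3) • Δw‖ := by congr 1; module
    _ ≤ |b⁻¹ - a⁻¹ - c / a ^ 3| * b + |c / a ^ 3| * δ := by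
        simpa only [norm_smul, Real.norm_eq_abs] using
          norm_sub_le ((b⁻¹ - a⁻¹ - c / a ^ 3) • (w - Δw)) ((c / a ^ 3) • Δw)
    _ ≤ 4 * δ ^ 2 / a ^ 2 + δ ^ 2 / a ^ 2 :=
        add_le_add (abs_inv_sub_inv_sub_div_mul_le ha hΔ hab hc)
          (abs_div_pow_three_mul_le ha (abs_real_inner_le_norm w Δw))
    _ = 5 * δ ^ 2 / a ^ 2 := by ring

theorem stmt_9 (d : ℕ) (w Δw : EuclideanSpace ℝ (Fin d))
    (hw : w ≠ 0) (hΔ : ‖Δw‖ ≤ ‖w‖ / 2) :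
    ‖‖w - Δw‖⁻¹ • (w - Δw) - ‖w‖⁻¹ • w
        + ‖w‖⁻¹ • (Δw - ((inner ℝ w Δw : ℝ) / ‖w‖ ^ 2) • w)‖ ≤
      5 * ‖Δw‖ ^ 2 / ‖w‖ ^ 2 :=
  norm_inv_norm_smul_sub_linearization_le hw hΔ
end

section
/- Let X be uniformly distributed on the unit sphere S^{d-1} ⊂ ℝ^d with d ≥ 2, let θ, θ' ∈ S^{d-1} with angle φ := arccos⟨θ,θ'⟩, and let σ be the ReLU. Then E[σ(⟨θ,X⟩)·σ(⟨θ',X⟩)] = (1/(2d))·((π-φ)/π · cos φ + sin φ/π). In particular E[σ(⟨θ,X⟩)²] = 1/(2d). -/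
set_option linter.unusedSectionVars false
open Real MeasureTheory
section rot
variable {E : Type*} [NormedAddCommGroup E] [InnerProductSpace ℝ E]

lemma exists_rot {θ η : E} (hθ : ‖θ‖ = 1) (hη : ‖η‖ = 1) (hor : (inner ℝ θ η : ℝ) = 0)
    (c s : ℝ) (hcs : c ^ 2 + s ^ 2 = 1) :
    ∃ O : E ≃ₗᵢ[ℝ] E, ∀ x : E,
      (inner ℝ θ (O x) : ℝ) = c * inner ℝ θ x - s * inner ℝ η x ∧
      (inner ℝ η (O x) : ℝ) = s * inner ℝ θ x + c * inner ℝ η x := by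
  have hθθ : (inner ℝ θ θ : ℝ) = 1 := by rw [real_inner_self_eq_norm_sq, hθ]; norm_num
  have hηη : (inner ℝ η η : ℝ) = 1 := by rw [real_inner_self_eq_norm_sq, hη]; norm_num
  have hηθ : (inner ℝ η θ : ℝ) = 0 := by rw [real_inner_comm]; exact hor
  set F : ℝ → ℝ → E →L[ℝ] E := fun c s =>
    ContinuousLinearMap.id ℝ E + (c - 1) • (innerSL ℝ θ).smulRight θ
      + (-s) • (innerSL ℝ η).smulRight θ + s • (innerSL ℝ θ).smulRight η
      + (c - 1) • (innerSL ℝ η).smulRight η with hF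
  have hFapp : ∀ c s x, F c s x = x + ((c - 1) * inner ℝ θ x - s * inner ℝ η x) • θ
      + (s * (inner ℝ θ x : ℝ) + (c - 1) * inner ℝ η x) • η := by
    intro c s x
    simp [hF, ContinuousLinearMap.smulRight_apply, ContinuousLinearMap.add_apply,
      ContinuousLinearMap.smul_apply]
    module
  have hinner : ∀ c' s' x, ((inner ℝ θ (F c' s' x) : ℝ) = c' * inner ℝ θ x - s' * inner ℝ η x)
      ∧ ((inner ℝ η (F c' s' x) : ℝ) = s' * inner ℝ θ x + c' * inner ℝ η x) := by
    intro c' s' x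
    rw [hFapp]
    constructor <;>
      simp [inner_add_right, inner_smul_right, hθθ, hηη, hor, hηθ, hθ, hη] <;> ring
  have hcomp : ∀ (s' : ℝ), s' ^ 2 = s ^ 2 → ∀ x, F c (-s') (F c s' x) = x := by
    intro s' hs' x
    rw [hFapp, hFapp]
    have h1 : (inner ℝ θ (x + ((c - 1) * inner ℝ θ x - s' * inner ℝ η x) • θ
        + (s' * (inner ℝ θ x : ℝ) + (c - 1) * inner ℝ η x) • η) : ℝ)
        = c * inner ℝ θ x - s' * inner ℝ η x := by
      simp [inner_add_right, inner_smul_right, hθθ, hηη, hor, hηθ, hθ, hη]; ring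
    have h2 : (inner ℝ η (x + ((c - 1) * inner ℝ θ x - s' * inner ℝ η x) • θ
        + (s' * (inner ℝ θ x : ℝ) + (c - 1) * inner ℝ η x) • η) : ℝ)
        = s' * inner ℝ θ x + c * inner ℝ η x := by
      simp [inner_add_right, inner_smul_right, hθθ, hηη, hor, hηθ, hθ, hη]; ring
    rw [h1, h2]
    match_scalars
    · ring
    · linear_combination (inner ℝ θ x : ℝ) * hcs + (inner ℝ θ x : ℝ) * hs'
    · linear_combination (inner ℝ η x : ℝ) * hcs + (inner ℝ η x : ℝ) * hs'
  have hnorm : ∀ x, ‖F c s x‖ = ‖x‖ := by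
    intro x
    have hxθ : (inner ℝ x θ : ℝ) = inner ℝ θ x := real_inner_comm _ _
    have hxη : (inner ℝ x η : ℝ) = inner ℝ η x := real_inner_comm _ _
    have key : (inner ℝ (F c s x) (F c s x) : ℝ) = inner ℝ x x := by
      rw [hFapp]
      simp only [inner_add_left, inner_add_right, real_inner_smul_left, real_inner_smul_right,
        hθθ, hηη, hor, hηθ, hxθ, hxη]
      ring_nf
      linear_combination (((inner ℝ θ x : ℝ)) ^ 2 + ((inner ℝ η x : ℝ)) ^ 2) * hcs
    rw [real_inner_self_eq_norm_sq, real_inner_self_eq_norm_sq] at key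
    calc ‖F c s x‖ = √(‖F c s x‖ ^ 2) := (Real.sqrt_sq (norm_nonneg _)).symm
      _ = √(‖x‖ ^ 2) := by rw [key]
      _ = ‖x‖ := Real.sqrt_sq (norm_nonneg _)
  have hss : (-s) ^ 2 = s ^ 2 := by ring
  let L : E ≃ₗ[ℝ] E := LinearEquiv.ofLinear (F c s).toLinearMap (F c (-s)).toLinearMap
    (by ext x
        have := hcomp (-s) hss ((F c (-s)).toLinearMap x)
        simpa [neg_neg] using hcomp (-s) hss x)
    (by ext x; simpa using hcomp s rfl x)
  refine ⟨⟨L, fun x => hnorm x⟩, fun x => hinner c s x⟩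

end rot
open Real MeasureTheory intervalIntegral

noncomputable def relu (t : ℝ) : ℝ := max t 0

lemma relu_cont : Continuous relu := continuous_id.max continuous_const

lemma relu_nonpos {t : ℝ} (h : t ≤ 0) : relu t = 0 := max_eq_right h
lemma relu_eq {t : ℝ} (h : 0 ≤ t) : relu t = t := max_eq_left h
lemma relu_nonneg (t : ℝ) : 0 ≤ relu t := le_max_right _ _
lemma relu_le_abs (t : ℝ) : relu t ≤ |t| := max_le (le_abs_self t) (abs_nonneg t)

lemma relu_mul {r t : ℝ} (hr : 0 ≤ r) : relu (r * t) = r * relu t := by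
  unfold relu
  rw [mul_max_of_nonneg _ _ hr, mul_zero]

lemma gper (φ : ℝ) : Function.Periodic (fun t => relu (cos t) * relu (cos (t - φ))) (2*π) := by
  intro t
  simp only [show ∀ a : ℝ, a + 2*π - φ = (a - φ) + 2*π from fun a => by ring,
    Real.cos_add_two_pi]

lemma lemD {φ : ℝ} (h0 : 0 ≤ φ) (h1 : φ ≤ π) :
    ∫ t in (0:ℝ)..(2*π), relu (cos t) * relu (cos (t - φ)) =
      (sin φ + (π - φ) * cos φ) / 2 := by
  have hpi := pi_pos
  set g : ℝ → ℝ := fun t => relu (cos t) * relu (cos (t - φ)) with hg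
  have hgc : Continuous g := by
    exact (relu_cont.comp continuous_cos).mul
      (relu_cont.comp (continuous_cos.comp (continuous_id.sub continuous_const)))
  have shift : ∫ t in (0:ℝ)..(2*π), g t = ∫ t in (-(π/2))..(-(π/2) + 2*π), g t := by
    have := (gper φ).intervalIntegral_add_eq 0 (-(π/2))
    simpa using this
  have hii : ∀ a b : ℝ, IntervalIntegrable g volume a b := fun a b => hgc.intervalIntegrable a b
  have split1 : (∫ t in (-(π/2))..(φ - π/2), g t) + ∫ t in (φ - π/2)..(-(π/2) + 2*π), g t
      = ∫ t in (-(π/2))..(-(π/2) + 2*π), g t :=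
    integral_add_adjacent_intervals (hii _ _) (hii _ _)
  have split2 : (∫ t in (φ - π/2)..(π/2), g t) + ∫ t in (π/2)..(-(π/2) + 2*π), g t
      = ∫ t in (φ - π/2)..(-(π/2) + 2*π), g t :=
    integral_add_adjacent_intervals (hii _ _) (hii _ _)
  have P1 : ∫ t in (-(π/2))..(φ - π/2), g t = 0 := by
    have heq : Set.EqOn g (fun _ => (0:ℝ)) (Set.uIcc (-(π/2)) (φ - π/2)) := by
      intro t ht
      rw [Set.uIcc_of_le (by linarith)] at ht
      obtain ⟨ht1, ht2⟩ := ht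
      have hc : cos (t - φ) ≤ 0 := by
        rw [← Real.cos_neg, neg_sub]
        exact Real.cos_nonpos_of_pi_div_two_le_of_le (by linarith) (by linarith)
      simp [hg, relu_nonpos hc]
    rw [integral_congr heq]; simp
  have P3 : ∫ t in (π/2)..(-(π/2) + 2*π), g t = 0 := by
    have heq : Set.EqOn g (fun _ => (0:ℝ)) (Set.uIcc (π/2) (-(π/2) + 2*π)) := by
      intro t ht
      rw [Set.uIcc_of_le (by linarith)] at ht
      obtain ⟨ht1, ht2⟩ := ht
      have hc : cos t ≤ 0 :=
        Real.cos_nonpos_of_pi_div_two_le_of_le (by linarith) (by linarith)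
      simp [hg, relu_nonpos hc]
    rw [integral_congr heq]; simp
  have P2 : ∫ t in (φ - π/2)..(π/2), g t = (sin φ + (π - φ) * cos φ) / 2 := by
    have congr2 : ∫ t in (φ - π/2)..(π/2), g t
        = ∫ t in (φ - π/2)..(π/2), cos t * cos (t - φ) := by
      apply integral_congr
      intro t ht
      rw [Set.uIcc_of_le (by linarith)] at ht
      obtain ⟨ht1, ht2⟩ := ht
      have hc1 : 0 ≤ cos t := Real.cos_nonneg_of_mem_Icc ⟨by linarith, by linarith⟩
      have hc2 : 0 ≤ cos (t - φ) := Real.cos_nonneg_of_mem_Icc ⟨by linarith, by linarith⟩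
      simp [hg, relu_eq hc1, relu_eq hc2]
    rw [congr2]
    have hderiv : ∀ t ∈ Set.uIcc (φ - π/2) (π/2),
        HasDerivAt (fun t => sin (2*t - φ)/4 + cos φ * t/2) (cos t * cos (t - φ)) t := by
      intro t _
      have h1 : HasDerivAt (fun t : ℝ => 2*t - φ) 2 t := by
        simpa using ((hasDerivAt_id t).const_mul 2).sub_const φ
      have h2 := (Real.hasDerivAt_sin (2*t - φ)).comp t h1
      have h3 : HasDerivAt (fun t => sin (2*t - φ)/4 + cos φ * t/2)
          (cos (2*t - φ) * 2 / 4 + cos φ * 1/2) t :=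
        (h2.div_const 4).add (((hasDerivAt_id t).const_mul (cos φ)).div_const 2)
      convert h3 using 1
      have e1 : cos (2*t - φ) = cos t * cos (t-φ) - sin t * sin (t-φ) := by
        rw [show 2*t - φ = t + (t - φ) by ring, Real.cos_add]
      have e2 := Real.cos_sub t (t - φ)
      rw [show t - (t-φ) = φ by ring] at e2
      rw [e1, e2]; ring
    rw [integral_eq_sub_of_hasDerivAt hderiv
      ((continuous_cos.mul (continuous_cos.comp (continuous_id.sub continuous_const))).intervalIntegrable _ _)]
    have e3 : sin (2*(π/2) - φ) = sin φ := by
      rw [show 2*(π/2) - φ = π - φ by ring, Real.sin_pi_sub]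
    have e4 : sin (2*(φ - π/2) - φ) = -sin φ := by
      rw [show 2*(φ - π/2) - φ = -(π - φ) by ring, Real.sin_neg, Real.sin_pi_sub]
    rw [e3, e4]; ring
  linarith [split1, split2, shift]

lemma lemC {φ : ℝ} (h0 : 0 ≤ φ) (h1 : φ ≤ π) (p q : ℝ) :
    ∫ t in (0:ℝ)..(2*π), relu (p * cos t - q * sin t) * relu (p * cos (t-φ) - q * sin (t-φ))
      = (p^2 + q^2) * ((sin φ + (π - φ) * cos φ) / 2) := by
  rcases eq_or_ne (p^2 + q^2) 0 with hz | hnz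
  · have hp : p = 0 := by nlinarith [sq_nonneg p, sq_nonneg q]
    have hq : q = 0 := by nlinarith [sq_nonneg p, sq_nonneg q]
    simp [hp, hq, relu]
  · set r := Real.sqrt (p^2 + q^2) with hr
    have hrpos : 0 < r := Real.sqrt_pos.2 (lt_of_le_of_ne (by positivity) (Ne.symm hnz))
    have hr2 : r^2 = p^2 + q^2 := Real.sq_sqrt (by positivity)
    set a := p / r with ha
    set b := -q / r with hb
    have hab : a^2 + b^2 = 1 := by
      rw [ha, hb, div_pow, div_pow, neg_sq, ← add_div, ← hr2]
      exact div_self (pow_pos hrpos 2).ne'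
    have haru : |a| ≤ 1 := by nlinarith [sq_nonneg b, sq_abs a]
    obtain ⟨δ, hcos, hsin⟩ : ∃ δ, cos δ = a ∧ sin δ = b := by
      rcases le_total 0 b with hbpos | hbneg
      · refine ⟨Real.arccos a, Real.cos_arccos (by linarith [abs_le.1 haru]) (by linarith [abs_le.1 haru]), ?_⟩
        rw [Real.sin_arccos]
        rw [show 1 - a^2 = b^2 by linarith, Real.sqrt_sq hbpos]
      · refine ⟨-Real.arccos a, by rw [Real.cos_neg]; exact Real.cos_arccos (by linarith [abs_le.1 haru]) (by linarith [abs_le.1 haru]), ?_⟩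
        rw [Real.sin_neg, Real.sin_arccos]
        rw [show 1 - a^2 = b^2 by linarith, show Real.sqrt (b^2) = -b from by
          rw [Real.sqrt_sq_eq_abs, abs_of_nonpos hbneg]]
        ring
    have key : ∀ t : ℝ, p * cos t - q * sin t = r * cos (t - δ) := by
      intro t
      have hp' : p = r * a := by rw [ha]; field_simp
      have hq' : q = -(r * b) := by rw [hb]; field_simp
      rw [Real.cos_sub, hp', hq', ← hcos, ← hsin]; ring
    have congr1 : ∫ t in (0:ℝ)..(2*π),
        relu (p * cos t - q * sin t) * relu (p * cos (t-φ) - q * sin (t-φ))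
        = ∫ t in (0:ℝ)..(2*π), r^2 * (relu (cos (t - δ)) * relu (cos ((t - δ) - φ))) := by
      apply integral_congr
      intro t _
      dsimp only
      rw [key t, key (t - φ), relu_mul hrpos.le, relu_mul hrpos.le,
        show t - φ - δ = (t - δ) - φ by ring]
      ring
    rw [congr1, intervalIntegral.integral_const_mul]
    have comp : ∫ t in (0:ℝ)..(2*π), relu (cos (t - δ)) * relu (cos ((t - δ) - φ))
        = ∫ t in (0 - δ:ℝ)..(2*π - δ), relu (cos t) * relu (cos (t - φ)) :=
      intervalIntegral.integral_comp_sub_right (fun s => relu (cos s) * relu (cos (s - φ))) δ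
    rw [comp]
    have := (gper φ).intervalIntegral_add_eq (0 - δ) 0
    rw [show 0 - δ + 2*π = 2*π - δ by ring, show (0:ℝ) + 2*π = 2*π by ring] at this
    rw [this, lemD h0 h1, hr2]

section sphere
variable {d : ℕ} {μ : Measure (EuclideanSpace ℝ (Fin d))} [IsProbabilityMeasure μ]

lemma ae_norm_one (hsupp : μ (Metric.sphere (0 : EuclideanSpace ℝ (Fin d)) 1) = 1) :
    ∀ᵐ x ∂μ, ‖x‖ = 1 := by
  have h0 : μ (Metric.sphere (0 : EuclideanSpace ℝ (Fin d)) 1)ᶜ = 0 :=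
    (prob_compl_eq_zero_iff Metric.isClosed_sphere.measurableSet).2 hsupp
  rw [MeasureTheory.ae_iff]
  have he : {a : EuclideanSpace ℝ (Fin d) | ¬‖a‖ = 1}
      = (Metric.sphere (0 : EuclideanSpace ℝ (Fin d)) 1)ᶜ := by
    ext x; simp [mem_sphere_zero_iff_norm]
  rw [he]; exact h0

lemma int_comp (hinv : ∀ O : EuclideanSpace ℝ (Fin d) ≃ₗᵢ[ℝ] EuclideanSpace ℝ (Fin d),
      Measure.map O μ = μ)
    (O : EuclideanSpace ℝ (Fin d) ≃ₗᵢ[ℝ] EuclideanSpace ℝ (Fin d))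
    {f : EuclideanSpace ℝ (Fin d) → ℝ} (hf : AEStronglyMeasurable f μ) :
    ∫ x, f (O x) ∂μ = ∫ x, f x ∂μ := by
  conv_rhs => rw [← hinv O]
  rw [integral_map O.continuous.measurable.aemeasurable (by rwa [hinv O])]

lemma integrable_of_bdd (hsupp : μ (Metric.sphere (0 : EuclideanSpace ℝ (Fin d)) 1) = 1)
    {f : EuclideanSpace ℝ (Fin d) → ℝ} (hf : Continuous f) (C : ℝ)
    (hb : ∀ x, ‖x‖ = 1 → |f x| ≤ C) : Integrable f μ :=
  Integrable.mono' (integrable_const C) hf.aestronglyMeasurable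
    ((ae_norm_one hsupp).mono fun x hx => by
      simpa [Real.norm_eq_abs] using hb x hx)

lemma integrable_inner_mul (hsupp : μ (Metric.sphere (0 : EuclideanSpace ℝ (Fin d)) 1) = 1)
    (a b : EuclideanSpace ℝ (Fin d)) :
    Integrable (fun x => (inner ℝ a x : ℝ) * (inner ℝ b x : ℝ)) μ := by
  refine integrable_of_bdd hsupp ?_ (‖a‖ * ‖b‖) ?_
  · exact (continuous_const.inner continuous_id).mul (continuous_const.inner continuous_id)
  · intro x hx
    rw [abs_mul]
    have h1 := abs_real_inner_le_norm a x
    have h2 := abs_real_inner_le_norm b x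
    rw [hx, mul_one] at h1 h2
    exact mul_le_mul h1 h2 (abs_nonneg _) (norm_nonneg _)

lemma integral_inner_sq_eq (hinv : ∀ O : EuclideanSpace ℝ (Fin d) ≃ₗᵢ[ℝ] EuclideanSpace ℝ (Fin d),
      Measure.map O μ = μ)
    {a b : EuclideanSpace ℝ (Fin d)} (ha : ‖a‖ = 1) (hb : ‖b‖ = 1) :
    ∫ x, (inner ℝ a x : ℝ)^2 ∂μ = ∫ x, (inner ℝ b x : ℝ)^2 ∂μ := by
  set O := Submodule.reflection (ℝ ∙ (b - a))ᗮ with hO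
  have hOb : O b = a := Submodule.reflection_sub (by rw [ha, hb])
  have hOa : O a = b := by
    rw [← hOb, hO, Submodule.reflection_reflection]
  have key : ∀ x, (inner ℝ a x : ℝ) = inner ℝ b (O x) := by
    intro x
    rw [← hOa, LinearIsometryEquiv.inner_map_map]
  calc ∫ x, (inner ℝ a x : ℝ)^2 ∂μ = ∫ x, (inner ℝ b (O x) : ℝ)^2 ∂μ := by
        simp_rw [key]
    _ = ∫ x, (inner ℝ b x : ℝ)^2 ∂μ :=
        int_comp hinv O ((continuous_const.inner continuous_id).pow 2).aestronglyMeasurable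

lemma integral_inner_sq (hd : 2 ≤ d)
    (hsupp : μ (Metric.sphere (0 : EuclideanSpace ℝ (Fin d)) 1) = 1)
    (hinv : ∀ O : EuclideanSpace ℝ (Fin d) ≃ₗᵢ[ℝ] EuclideanSpace ℝ (Fin d),
      Measure.map O μ = μ)
    {a : EuclideanSpace ℝ (Fin d)} (ha : ‖a‖ = 1) :
    ∫ x, (inner ℝ a x : ℝ)^2 ∂μ = 1 / d := by
  classical
  set e : Fin d → EuclideanSpace ℝ (Fin d) := fun i => EuclideanSpace.single i 1 with he
  have hei : ∀ i, ‖e i‖ = 1 := fun i => by simp [he]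
  have hsum : ∑ i, ∫ x, (inner ℝ (e i) x : ℝ)^2 ∂μ = 1 := by
    rw [← MeasureTheory.integral_finset_sum]
    · have : ∀ᵐ x ∂μ, ∑ i, (inner ℝ (e i) x : ℝ)^2 = 1 := by
        refine (ae_norm_one hsupp).mono fun x hx => ?_
        have : ∑ i, (inner ℝ (e i) x : ℝ)^2 = (inner ℝ x x : ℝ) := by
          rw [PiLp.inner_apply]
          refine Finset.sum_congr rfl fun i _ => ?_
          simp [he, EuclideanSpace.inner_single_left]
        rw [this, real_inner_self_eq_norm_sq, hx, one_pow]
      rw [integral_congr_ae this]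
      simp
    · intro i _
      simpa [sq] using integrable_inner_mul hsupp (e i) (e i)
  have hcongr : ∀ i ∈ Finset.univ, ∫ x, (inner ℝ (e i) x : ℝ)^2 ∂μ
      = ∫ x, (inner ℝ a x : ℝ)^2 ∂μ := fun i _ => integral_inner_sq_eq hinv (hei i) ha
  rw [Finset.sum_congr rfl hcongr, Finset.sum_const, Finset.card_univ, Fintype.card_fin] at hsum
  have hd0 : (d : ℝ) ≠ 0 := by positivity
  field_simp
  rw [mul_comm]
  simpa [nsmul_eq_mul] using hsum

end sphere
section cross
variable {d : ℕ} {μ : Measure (EuclideanSpace ℝ (Fin d))} [IsProbabilityMeasure μ]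

local notation "E'" => EuclideanSpace ℝ (Fin d)

lemma abs_bd {u w c s : ℝ} (hu : |u| ≤ 1) (hw : |w| ≤ 1) (hc : |c| ≤ 1) (hs : |s| ≤ 1) :
    |u * c - w * s| ≤ 2 := by
  have h1 : |u * c| ≤ 1 := by
    rw [abs_mul]; exact mul_le_one₀ hu (abs_nonneg _) hc
  have h2 : |w * s| ≤ 1 := by
    rw [abs_mul]; exact mul_le_one₀ hw (abs_nonneg _) hs
  calc |u * c - w * s| ≤ |u * c| + |w * s| := abs_sub _ _
    _ ≤ 2 := by linarith

lemma main_cross (hd : 2 ≤ d)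
    (hsupp : μ (Metric.sphere (0 : E') 1) = 1)
    (hinv : ∀ O : E' ≃ₗᵢ[ℝ] E', Measure.map O μ = μ)
    {θ η : E'} (hθ : ‖θ‖ = 1) (hη : ‖η‖ = 1) (hor : (inner ℝ θ η : ℝ) = 0)
    {φ : ℝ} (h0 : 0 ≤ φ) (h1 : φ ≤ π) :
    ∫ x, relu (inner ℝ θ x : ℝ) * relu ((inner ℝ θ x : ℝ) * cos φ + (inner ℝ η x : ℝ) * sin φ) ∂μ
      = (sin φ + (π - φ) * cos φ) / (2 * π * d) := by
  have hpi := pi_pos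
  have hd0 : (0:ℝ) < d := by positivity
  set u : E' → ℝ := fun x => (inner ℝ θ x : ℝ) with hu
  set w : E' → ℝ := fun x => (inner ℝ η x : ℝ) with hw
  set Φ : ℝ → E' → ℝ := fun β x =>
    relu (u x * cos β - w x * sin β) * relu (u x * cos (β - φ) - w x * sin (β - φ)) with hΦ
  have hucont : Continuous u := continuous_const.inner continuous_id
  have hwcont : Continuous w := continuous_const.inner continuous_id
  have hΦcont : Continuous (Function.uncurry Φ) := by
    apply Continuous.mul
    · exact relu_cont.comp (((hucont.comp continuous_snd).mul
        (Real.continuous_cos.comp continuous_fst)).sub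
        ((hwcont.comp continuous_snd).mul (Real.continuous_sin.comp continuous_fst)))
    · exact relu_cont.comp (((hucont.comp continuous_snd).mul
        (Real.continuous_cos.comp (continuous_fst.sub continuous_const))).sub
        ((hwcont.comp continuous_snd).mul
          (Real.continuous_sin.comp (continuous_fst.sub continuous_const))))
  have hΦβcont : ∀ β, Continuous (Φ β) := fun β =>
    hΦcont.comp (continuous_const.prodMk continuous_id)
  -- Step A
  have stepA : ∀ β, ∫ x, Φ β x ∂μ = ∫ x, Φ 0 x ∂μ := by
    intro β
    obtain ⟨O, hO⟩ := exists_rot hθ hη hor (cos β) (sin β)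
      (by rw [add_comm]; exact Real.sin_sq_add_cos_sq β)
    have hcomp : ∀ x, Φ 0 (O x) = Φ β x := by
      intro x
      obtain ⟨hOθ, hOη⟩ := hO x
      simp only [hΦ, hu, hw, zero_sub, Real.cos_zero, Real.sin_zero, Real.cos_neg,
        Real.sin_neg, hOθ, hOη]
      congr 1
      · congr 1; ring
      · congr 1
        rw [Real.cos_sub, Real.sin_sub]; ring
    rw [← int_comp hinv O (hΦβcont 0).aestronglyMeasurable]
    simp_rw [hcomp]
  -- integrability on product
  set ν : Measure ℝ := volume.restrict (Set.Ioc (0:ℝ) (2*π)) with hν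
  haveI : IsFiniteMeasure ν := by
    constructor
    rw [hν, Measure.restrict_apply_univ]
    simp [Real.volume_Ioc, ENNReal.mul_lt_top]
  have habs : ∀ (a : E'), ‖a‖ = 1 → ∀ b : E', ‖b‖ = 1 → |(inner ℝ b a : ℝ)| ≤ 1 := by
    intro a ha b hb
    have := abs_real_inner_le_norm b a
    rwa [ha, hb, one_mul] at this
  have hbd : ∀ᵐ p ∂(ν.prod μ), ‖Function.uncurry Φ p‖ ≤ 4 := by
    have hnull : (ν.prod μ) {p : ℝ × E' | ¬ ‖p.2‖ = 1} = 0 := by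
      have hsub : {p : ℝ × E' | ¬ ‖p.2‖ = 1} ⊆ (Set.univ : Set ℝ) ×ˢ {x : E' | ¬ ‖x‖ = 1} :=
        fun p hp => Set.mem_prod.2 ⟨Set.mem_univ _, hp⟩
      refine measure_mono_null hsub ?_
      rw [Measure.prod_prod]
      have hμ0 : μ {x : E' | ¬ ‖x‖ = 1} = 0 := by
        rw [← MeasureTheory.ae_iff]; exact ae_norm_one hsupp
      rw [hμ0, mul_zero]
    have hae : ∀ᵐ p ∂(ν.prod μ), ‖p.2‖ = 1 := by rw [MeasureTheory.ae_iff]; exact hnull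
    refine hae.mono fun p hp => ?_
    have hup : |u p.2| ≤ 1 := habs _ hp θ hθ
    have hwp : |w p.2| ≤ 1 := habs _ hp η hη
    have b1 : |u p.2 * cos p.1 - w p.2 * sin p.1| ≤ 2 :=
      abs_bd hup hwp (Real.abs_cos_le_one _) (Real.abs_sin_le_one _)
    have b2 : |u p.2 * cos (p.1 - φ) - w p.2 * sin (p.1 - φ)| ≤ 2 :=
      abs_bd hup hwp (Real.abs_cos_le_one _) (Real.abs_sin_le_one _)
    have hΦp : Function.uncurry Φ p = Φ p.1 p.2 := rfl
    rw [hΦp, Real.norm_eq_abs, hΦ, abs_mul, abs_of_nonneg (relu_nonneg _),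
      abs_of_nonneg (relu_nonneg _)]
    calc relu (u p.2 * cos p.1 - w p.2 * sin p.1)
          * relu (u p.2 * cos (p.1 - φ) - w p.2 * sin (p.1 - φ))
        ≤ |u p.2 * cos p.1 - w p.2 * sin p.1|
          * |u p.2 * cos (p.1 - φ) - w p.2 * sin (p.1 - φ)| :=
          mul_le_mul (relu_le_abs _) (relu_le_abs _) (relu_nonneg _) (abs_nonneg _)
      _ ≤ 2 * 2 := mul_le_mul b1 b2 (abs_nonneg _) (by norm_num)
      _ = 4 := by norm_num
  have hIntProd : Integrable (Function.uncurry Φ) (ν.prod μ) :=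
    Integrable.mono' (integrable_const 4) hΦcont.aestronglyMeasurable hbd
  -- step B/C
  set T := ∫ x, Φ 0 x ∂μ with hT
  have chain : 2 * π * T = ∫ x, (u x ^ 2 + w x ^ 2) * ((sin φ + (π - φ) * cos φ) / 2) ∂μ := by
    have e1 : ∫ β in (0:ℝ)..(2*π), (∫ x, Φ β x ∂μ) = (2*π) * T := by
      rw [intervalIntegral.integral_congr (g := fun _ => T)
        (fun β _ => stepA β)]
      rw [intervalIntegral.integral_const, smul_eq_mul, sub_zero]
    have e2 : ∫ β in (0:ℝ)..(2*π), (∫ x, Φ β x ∂μ) = ∫ β, (∫ x, Φ β x ∂μ) ∂ν := by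
      rw [intervalIntegral.integral_of_le (by positivity)]
    have e3 : ∫ β, (∫ x, Φ β x ∂μ) ∂ν = ∫ x, (∫ β, Φ β x ∂ν) ∂μ :=
      integral_integral_swap hIntProd
    have e4 : ∀ x, (∫ β, Φ β x ∂ν) = (u x ^ 2 + w x ^ 2) * ((sin φ + (π - φ) * cos φ) / 2) := by
      intro x
      have : ∫ β, Φ β x ∂ν = ∫ β in (0:ℝ)..(2*π), Φ β x := by
        rw [intervalIntegral.integral_of_le (by positivity)]
      rw [this, hΦ]
      exact lemC h0 h1 (u x) (w x)
    rw [← e1, e2, e3]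
    exact MeasureTheory.integral_congr_ae (Filter.Eventually.of_forall e4)
  -- step E
  have hIu : Integrable (fun x => u x ^ 2) μ := by
    simpa [sq] using integrable_inner_mul hsupp θ θ
  have hIw : Integrable (fun x => w x ^ 2) μ := by
    simpa [sq] using integrable_inner_mul hsupp η η
  have e5 : ∫ x, (u x ^ 2 + w x ^ 2) * ((sin φ + (π - φ) * cos φ) / 2) ∂μ
      = (1/d + 1/d) * ((sin φ + (π - φ) * cos φ) / 2) := by
    rw [MeasureTheory.integral_mul_const, MeasureTheory.integral_add hIu hIw,
      integral_inner_sq hd hsupp hinv hθ, integral_inner_sq hd hsupp hinv hη]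
  rw [e5] at chain
  -- conclude
  have target : ∫ x, relu (inner ℝ θ x : ℝ)
      * relu ((inner ℝ θ x : ℝ) * cos φ + (inner ℝ η x : ℝ) * sin φ) ∂μ = T := by
    rw [hT]
    apply MeasureTheory.integral_congr_ae
    refine Filter.Eventually.of_forall fun x => ?_
    simp only [hΦ, hu, hw, zero_sub, Real.cos_zero, Real.sin_zero, Real.cos_neg, Real.sin_neg]
    congr 1
    · congr 1; ring
    · congr 1; ring
  rw [target]
  have hπd : 2 * π * ((sin φ + (π - φ) * cos φ) / (2 * π * d))
      = (1/d + 1/d) * ((sin φ + (π - φ) * cos φ) / 2) := by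
    field_simp
    ring
  have h2π : (2 * π) ≠ 0 := by positivity
  have := chain.trans hπd.symm
  exact mul_left_cancel₀ h2π this

end cross
theorem stmt_15 (d : ℕ) (hd : 2 ≤ d)
    (μ : Measure (EuclideanSpace ℝ (Fin d))) [IsProbabilityMeasure μ]
    (hsupp : μ (Metric.sphere (0 : EuclideanSpace ℝ (Fin d)) 1) = 1)
    (hinv : ∀ O : EuclideanSpace ℝ (Fin d) ≃ₗᵢ[ℝ] EuclideanSpace ℝ (Fin d),
      Measure.map O μ = μ)
    (θ θ' : EuclideanSpace ℝ (Fin d)) (hθ : ‖θ‖ = 1) (hθ' : ‖θ'‖ = 1) :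
    (∫ x, max (inner ℝ θ x : ℝ) 0 * max (inner ℝ θ' x : ℝ) 0 ∂μ =
        (1 / (2 * d)) *
          ((π - Real.arccos (inner ℝ θ θ' : ℝ)) / π * Real.cos (Real.arccos (inner ℝ θ θ' : ℝ))
            + Real.sin (Real.arccos (inner ℝ θ θ' : ℝ)) / π)) ∧
      ∫ x, max (inner ℝ θ x : ℝ) 0 ^ 2 ∂μ = 1 / (2 * d) := by
  have hpi := pi_pos
  have hd0 : (0:ℝ) < d := by positivity
  have hucont : Continuous fun x : EuclideanSpace ℝ (Fin d) => (inner ℝ θ x : ℝ) :=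
    continuous_const.inner continuous_id
  -- second conjunct
  have part2 : ∫ x, max (inner ℝ θ x : ℝ) 0 ^ 2 ∂μ = 1 / (2 * d) := by
    have hneg : ∫ x, relu ((inner ℝ θ x : ℝ)) ^ 2 ∂μ
        = ∫ x, relu (-(inner ℝ θ x : ℝ)) ^ 2 ∂μ := by
      set O := (LinearIsometryEquiv.neg ℝ :
        EuclideanSpace ℝ (Fin d) ≃ₗᵢ[ℝ] EuclideanSpace ℝ (Fin d)) with hOdef
      have hc : Continuous fun x : EuclideanSpace ℝ (Fin d) => relu ((inner ℝ θ x : ℝ)) ^ 2 :=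
        (relu_cont.comp hucont).pow 2
      have : ∫ x, relu ((inner ℝ θ (O x) : ℝ)) ^ 2 ∂μ = ∫ x, relu ((inner ℝ θ x : ℝ)) ^ 2 ∂μ :=
        int_comp hinv O hc.aestronglyMeasurable
      rw [← this]
      apply MeasureTheory.integral_congr_ae
      refine Filter.Eventually.of_forall fun x => ?_
      have hOx : O x = -x := rfl
      simp only [hOx, inner_neg_right]
    have hid : ∀ s : ℝ, relu s ^ 2 + relu (-s) ^ 2 = s ^ 2 := by
      intro s
      rcases le_total s 0 with h | h
      · rw [relu_nonpos h, relu_eq (neg_nonneg.2 h)]; ring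
      · rw [relu_eq h, relu_nonpos (neg_nonpos.2 h)]; ring
    have hbd1 : ∀ (f : EuclideanSpace ℝ (Fin d) → ℝ), Continuous f →
        (∀ x, |f x| ≤ |(inner ℝ θ x : ℝ)|) →
        Integrable (fun x => relu (f x) ^ 2) μ := by
      intro f hf hb
      refine integrable_of_bdd hsupp ((relu_cont.comp hf).pow 2) 1 fun x hx => ?_
      have h1 : |(inner ℝ θ x : ℝ)| ≤ 1 := by
        have := abs_real_inner_le_norm θ x
        rwa [hθ, hx, one_mul] at this
      have h2 : |relu (f x)| ≤ 1 := by
        rw [abs_of_nonneg (relu_nonneg _)]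
        exact le_trans (relu_le_abs _) (le_trans (hb x) h1)
      have h3 : relu (f x) ≤ 1 := by
        rw [abs_of_nonneg (relu_nonneg _)] at h2; exact h2
      rw [abs_of_nonneg (sq_nonneg _)]
      nlinarith [relu_nonneg (f x)]
    have hI1 : Integrable (fun x => relu ((inner ℝ θ x : ℝ)) ^ 2) μ :=
      hbd1 _ hucont fun x => le_refl _
    have hI2 : Integrable (fun x => relu (-(inner ℝ θ x : ℝ)) ^ 2) μ :=
      hbd1 _ hucont.neg fun x => by rw [abs_neg]
    have hsum : (∫ x, relu ((inner ℝ θ x : ℝ)) ^ 2 ∂μ)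
        + ∫ x, relu (-(inner ℝ θ x : ℝ)) ^ 2 ∂μ = 1 / d := by
      rw [← MeasureTheory.integral_add hI1 hI2]
      have : ∀ x : EuclideanSpace ℝ (Fin d),
          relu ((inner ℝ θ x : ℝ)) ^ 2 + relu (-(inner ℝ θ x : ℝ)) ^ 2 = (inner ℝ θ x : ℝ) ^ 2 :=
        fun x => hid _
      simp_rw [this]
      exact integral_inner_sq hd hsupp hinv hθ
    rw [← hneg] at hsum
    have : ∫ x, max (inner ℝ θ x : ℝ) 0 ^ 2 ∂μ = ∫ x, relu ((inner ℝ θ x : ℝ)) ^ 2 ∂μ := rfl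
    rw [this]
    rw [show (1:ℝ) / (2 * d) = (1 / d) / 2 by field_simp]
    linarith
  refine ⟨?_, part2⟩
  have ht1 : |(inner ℝ θ θ' : ℝ)| ≤ 1 := by
    have := abs_real_inner_le_norm θ θ'
    rwa [hθ, hθ', one_mul] at this
  rcases eq_or_lt_of_le (abs_le.1 ht1).2 with heq1 | hlt1
  · -- inner ℝ θ θ' = 1, so θ' = θ
    have hθθ' : θ' = θ := by
      have hsq : ‖θ' - θ‖ ^ 2 = 0 := by
        rw [norm_sub_sq_real, hθ, hθ', real_inner_comm, heq1]; ring
      have := pow_eq_zero_iff (n := 2) (by norm_num) |>.1 hsq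
      rwa [norm_eq_zero, sub_eq_zero] at this
    rw [hθθ']
    have hinner1 : (inner ℝ θ θ : ℝ) = 1 := by
      rw [real_inner_self_eq_norm_sq, hθ]; norm_num
    have lhs : ∫ x, max (inner ℝ θ x : ℝ) 0 * max (inner ℝ θ x : ℝ) 0 ∂μ
        = ∫ x, max (inner ℝ θ x : ℝ) 0 ^ 2 ∂μ := by
      apply MeasureTheory.integral_congr_ae
      exact Filter.Eventually.of_forall fun x => (sq _).symm
    rw [lhs, part2, hinner1, Real.arccos_one]
    rw [Real.cos_zero, Real.sin_zero]
    rw [show (π - 0) / π = 1 by field_simp; ring]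
    norm_num
  rcases eq_or_lt_of_le (abs_le.1 ht1).1 with heqm | hgtm
  · -- inner ℝ θ θ' = -1, so θ' = -θ
    have hθθ' : θ' = -θ := by
      have hsq : ‖θ' + θ‖ ^ 2 = 0 := by
        rw [norm_add_sq_real, hθ, hθ', real_inner_comm, ← heqm]; ring
      have := pow_eq_zero_iff (n := 2) (by norm_num) |>.1 hsq
      rw [norm_eq_zero] at this
      exact eq_neg_of_add_eq_zero_left this
    rw [hθθ']
    have hinnerm : (inner ℝ θ (-θ) : ℝ) = -1 := by
      rw [inner_neg_right, real_inner_self_eq_norm_sq, hθ]; norm_num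
    have lhs : ∫ x, max (inner ℝ θ x : ℝ) 0 * max (inner ℝ (-θ) x : ℝ) 0 ∂μ = 0 := by
      have : ∀ x : EuclideanSpace ℝ (Fin d),
          max (inner ℝ θ x : ℝ) 0 * max (inner ℝ (-θ) x : ℝ) 0 = 0 := by
        intro x
        rw [inner_neg_left]
        rcases le_total (inner ℝ θ x : ℝ) 0 with h | h
        · rw [max_eq_right h, zero_mul]
        · rw [max_eq_right (neg_nonpos.2 h), mul_zero]
      simp_rw [this]
      exact MeasureTheory.integral_zero _ _
    rw [lhs, hinnerm, Real.arccos_neg_one, Real.cos_pi, Real.sin_pi]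
    rw [show (π - π) / π = 0 by field_simp; ring]
    norm_num
  · -- generic case
    set t : ℝ := (inner ℝ θ θ' : ℝ) with htdef
    set φ := Real.arccos t with hφdef
    have hφ0 : 0 ≤ φ := Real.arccos_nonneg t
    have hφπ : φ ≤ π := Real.arccos_le_pi t
    have hcos : Real.cos φ = t := Real.cos_arccos hgtm.le hlt1.le
    have hsin : Real.sin φ = Real.sqrt (1 - t ^ 2) := Real.sin_arccos t
    have ht2 : t ^ 2 < 1 := by nlinarith
    have hsinpos : 0 < Real.sin φ := by
      rw [hsin]; exact Real.sqrt_pos.2 (by linarith)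
    set v : EuclideanSpace ℝ (Fin d) := θ' - t • θ with hvdef
    have hv2 : ‖v‖ ^ 2 = 1 - t ^ 2 := by
      rw [hvdef, norm_sub_sq_real, hθ']
      rw [real_inner_smul_right, real_inner_comm, ← htdef]
      rw [norm_smul, Real.norm_eq_abs, hθ, mul_one, sq_abs]
      ring
    have hnv : ‖v‖ = Real.sin φ := by
      have h1 : Real.sin φ ^ 2 = 1 - t ^ 2 := by
        rw [Real.sin_sq, hcos]
      calc ‖v‖ = Real.sqrt (‖v‖ ^ 2) := (Real.sqrt_sq (norm_nonneg _)).symm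
        _ = Real.sqrt (Real.sin φ ^ 2) := by rw [hv2, h1]
        _ = Real.sin φ := Real.sqrt_sq hsinpos.le
    set η : EuclideanSpace ℝ (Fin d) := (Real.sin φ)⁻¹ • v with hηdef
    have hηnorm : ‖η‖ = 1 := by
      rw [hηdef, norm_smul, Real.norm_eq_abs, abs_of_pos (inv_pos.2 hsinpos), hnv]
      field_simp
    have hor : (inner ℝ θ η : ℝ) = 0 := by
      rw [hηdef, real_inner_smul_right, hvdef, inner_sub_right, real_inner_smul_right,
        real_inner_self_eq_norm_sq, hθ]
      rw [← htdef]
      ring_nf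
    have hdecomp : ∀ x : EuclideanSpace ℝ (Fin d),
        (inner ℝ θ' x : ℝ) = (inner ℝ θ x : ℝ) * Real.cos φ + (inner ℝ η x : ℝ) * Real.sin φ := by
      intro x
      have hv : Real.sin φ • η = v := smul_inv_smul₀ hsinpos.ne' v
      have hθ'eq : θ' = t • θ + Real.sin φ • η := by
        rw [hv, hvdef]; abel
      rw [hθ'eq, inner_add_left, real_inner_smul_left, real_inner_smul_left, hcos]
      ring
    have hmain := main_cross hd hsupp hinv hθ hηnorm hor hφ0 hφπ
    have lhs : ∫ x, max (inner ℝ θ x : ℝ) 0 * max (inner ℝ θ' x : ℝ) 0 ∂μ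
        = ∫ x, relu (inner ℝ θ x : ℝ)
            * relu ((inner ℝ θ x : ℝ) * Real.cos φ + (inner ℝ η x : ℝ) * Real.sin φ) ∂μ := by
      apply MeasureTheory.integral_congr_ae
      refine Filter.Eventually.of_forall fun x => ?_
      dsimp only
      rw [← hdecomp x]
      rfl
    rw [lhs, hmain, hcos]
    have hπ0 : π ≠ 0 := Real.pi_ne_zero
    have hdne : (d:ℝ) ≠ 0 := hd0.ne'
    field_simp
    ring
end
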